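/- Under the noisy-data setup (true system in difference-operator form with l at least its lag, data consistent with some noise V* ∈ 𝒱, Q ≺ 0, and the matrix [[Q̄, S̄],[S̄ᵀ, R̄]] invertible): if there exist a symmetric positive semidefinite P ∈ ℝ^{2ml×2ml} and μ ≥ 0 such that Gᵀ·diag(−P, P, ζ²I_m, −I_m)·G − μ·[[Q̃, S̃],[S̃ᵀ, R̃]] ⪯ 0, then lim_{τ→∞} γ₋(T^τ) ≥ ζ, where T^τ are the truncated input-output operators of the true noise-free system. -/

import Mathlib

/-!
The true parameters `(C̃, D̃)` explain the data with a noise in `𝒱`, so the data matrix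
`[[Q̄, S̄], [S̄ᵀ, R̄]]` is `⪯ 0` on the first block (as `Q ≺ 0`) and `⪰ 0` on the graph of
`-(C̃, D̃)ᵀ`; by the dualization lemma its inverse is `⪯ 0` on the graph of `(C̃, D̃)`, i.e. on
every `(ξ_k, u_k, y_k)` of the true system. By the S-procedure the LMI then makes `ξᵀPξ` a
storage function for the supply `ζ²|u|² - |y|²`. Summing from rest gives `ζ²‖u‖² ≤ ‖T^τ u‖²` for
every `u ∈ ℓ_{2,τ}`, so `γ₋(T^τ) ≥ ζ` for every `τ`, and the limit inherits the bound.
-/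

open scoped ENNReal
open Filter Matrix Topology

noncomputable section

abbrev Evec (m : ℕ) := EuclideanSpace ℂ (Fin m)

/-- Action of a real matrix on a complex Euclidean vector. -/
noncomputable def act {a b : ℕ} (M : Matrix (Fin a) (Fin b) ℝ) (v : Evec b) : Evec a :=
  Matrix.toEuclideanLin (M.map Complex.ofReal) v

/-- Output of the discrete-time system with zero initial state. -/
noncomputable def output {n m : ℕ} (A : Matrix (Fin n) (Fin n) ℝ) (B : Matrix (Fin n) (Fin m) ℝ)
    (C : Matrix (Fin m) (Fin n) ℝ) (D : Matrix (Fin m) (Fin m) ℝ)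
    (u : ℕ → Evec m) (k : ℕ) : Evec m :=
  act D (u k) + ∑ i ∈ Finset.range k, act (C * A ^ (k - 1 - i) * B) (u i)

/-- ℓ₂ norm of a sequence, valued in [0,∞]. -/
noncomputable def enorm2 {m : ℕ} (f : ℕ → Evec m) : ℝ≥0∞ :=
  (∑' k, (‖f k‖₊ : ℝ≥0∞) ^ 2) ^ (1/2 : ℝ)

noncomputable def norm2 {m : ℕ} (f : ℕ → Evec m) : ℝ := (enorm2 f).toReal

noncomputable def inner2 {m : ℕ} (f g : ℕ → Evec m) : ℂ := ∑' k, (inner ℂ (f k) (g k) : ℂ)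

noncomputable def sangle {m : ℕ} (u y : ℕ → Evec m) : ℝ :=
  open scoped Classical in
  if y = 0 then 0 else Real.arccos ((inner2 y u).re / (norm2 y * norm2 u))

noncomputable def srg {m : ℕ} (dom : Set (ℕ → Evec m))
    (T : (ℕ → Evec m) → (ℕ → Evec m)) : Set ℂ :=
  {w | ∃ u ∈ dom, u ≠ 0 ∧
    (w = ((norm2 (T u) / norm2 u : ℝ) : ℂ) * Complex.exp ((sangle u (T u) : ℂ) * Complex.I) ∨
     w = ((norm2 (T u) / norm2 u : ℝ) : ℂ) * Complex.exp (-(sangle u (T u) : ℂ) * Complex.I))}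

noncomputable def maxGain {m : ℕ} (dom : Set (ℕ → Evec m))
    (T : (ℕ → Evec m) → (ℕ → Evec m)) : ℝ≥0∞ :=
  ⨆ u ∈ {v ∈ dom | v ≠ 0}, enorm2 (T u) / enorm2 u

noncomputable def minGain {m : ℕ} (dom : Set (ℕ → Evec m))
    (T : (ℕ → Evec m) → (ℕ → Evec m)) : ℝ≥0∞ :=
  ⨅ u ∈ {v ∈ dom | v ≠ 0}, enorm2 (T u) / enorm2 u

/-- The subspace ℓ_{2,τ}: sequences vanishing strictly after time τ. -/
def ltwoTau (m τ : ℕ) : Set (ℕ → Evec m) := {u | ∀ k, τ < k → u k = 0}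

/-- The truncated operator T^τ. -/
noncomputable def TtauMap {n m : ℕ} (A : Matrix (Fin n) (Fin n) ℝ) (B : Matrix (Fin n) (Fin m) ℝ)
    (C : Matrix (Fin m) (Fin n) ℝ) (D : Matrix (Fin m) (Fin m) ℝ) (τ : ℕ)
    (u : ℕ → Evec m) (k : ℕ) : Evec m :=
  if k ≤ τ then output A B C D u k else 0

/-- Domain of the ℓ₂ operator T. -/
def domInf {n m : ℕ} (A : Matrix (Fin n) (Fin n) ℝ) (B : Matrix (Fin n) (Fin m) ℝ)
    (C : Matrix (Fin m) (Fin n) ℝ) (D : Matrix (Fin m) (Fin m) ℝ) : Set (ℕ → Evec m) :=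
  {u | enorm2 u ≠ ⊤ ∧ enorm2 (output A B C D u) ≠ ⊤}

/-- Limit of a sequence of subsets of a topological space. -/
def setLimit {X : Type*} [TopologicalSpace X] (S : ℕ → Set X) : Set X :=
  {x | ∃ z : ℕ → X, (∀ τ, z τ ∈ S τ) ∧ Tendsto z atTop (𝓝 x)}

/-- The (possibly unbounded) annulus centred at α with radii lo ≤ hi, as a subset of Ĉ. -/
def annulus (α : ℝ) (lo hi : ℝ≥0∞) : Set (OnePoint ℂ) :=
  {w | (w = OnePoint.infty ∧ hi = ⊤) ∨
    ∃ z : ℂ, w = (((α : ℂ) + z : ℂ) : OnePoint ℂ) ∧ lo ≤ (‖z‖₊ : ℝ≥0∞) ∧ (‖z‖₊ : ℝ≥0∞) ≤ hi}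




/-- A real matrix is negative semidefinite: symmetric and xᵀMx ≤ 0 for all x. -/
def IsNegSemidef {k : Type*} [Fintype k] (M : Matrix k k ℝ) : Prop :=
  M.IsSymm ∧ ∀ x : k → ℝ, x ⬝ᵥ M.mulVec x ≤ 0

/-- A real matrix is positive semidefinite: symmetric and xᵀMx ≥ 0 for all x. -/
def IsPosSemidefR {k : Type*} [Fintype k] (M : Matrix k k ℝ) : Prop :=
  M.IsSymm ∧ ∀ x : k → ℝ, 0 ≤ x ⬝ᵥ M.mulVec x

/-- A real matrix is negative definite. -/
def IsNegDef {k : Type*} [Fintype k] (M : Matrix k k ℝ) : Prop :=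
  M.IsSymm ∧ ∀ x : k → ℝ, x ≠ 0 → x ⬝ᵥ M.mulVec x < 0

/-- (A,B) is controllable: the controllability matrix has full rank n. -/
def Controllable {n m : ℕ} (A : Matrix (Fin n) (Fin n) ℝ) (B : Matrix (Fin n) (Fin m) ℝ) : Prop :=
  (Matrix.of fun i (p : Fin n × Fin m) => (A ^ (p.1 : ℕ) * B) i p.2).rank = n

/-- The observability matrix of depth l (rows C, CA, …, CA^{l-1}). -/
def obsMat {n m : ℕ} (A : Matrix (Fin n) (Fin n) ℝ) (C : Matrix (Fin m) (Fin n) ℝ) (l : ℕ) :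
    Matrix (Fin l × Fin m) (Fin n) ℝ :=
  Matrix.of fun p j => (C * A ^ (p.1 : ℕ)) p.2 j

/-- (A,C) is observable: the depth-n observability matrix has full rank n. -/
def Observable {n m : ℕ} (A : Matrix (Fin n) (Fin n) ℝ) (C : Matrix (Fin m) (Fin n) ℝ) : Prop :=
  (obsMat A C n).rank = n

/-- The lag of the system: smallest l ≥ 1 with full-rank observability matrix of depth l. -/
noncomputable def lag {n m : ℕ} (A : Matrix (Fin n) (Fin n) ℝ) (C : Matrix (Fin m) (Fin n) ℝ) : ℕ :=
  sInf {l | 1 ≤ l ∧ (obsMat A C l).rank = n}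

/-- The LMI matrix for the maximum gain. -/
def lmiMax {n m : ℕ} (A : Matrix (Fin n) (Fin n) ℝ) (B : Matrix (Fin n) (Fin m) ℝ)
    (C : Matrix (Fin m) (Fin n) ℝ) (D : Matrix (Fin m) (Fin m) ℝ)
    (P : Matrix (Fin n) (Fin n) ℝ) (γ : ℝ) : Matrix (Fin n ⊕ Fin m) (Fin n ⊕ Fin m) ℝ :=
  Matrix.fromBlocks (Aᵀ * P * A - P + Cᵀ * C) (Aᵀ * P * B + Cᵀ * D)
    (Bᵀ * P * A + Dᵀ * C) (Bᵀ * P * B + Dᵀ * D - γ ^ 2 • (1 : Matrix (Fin m) (Fin m) ℝ))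

/-- The LMI matrix for the minimum gain. -/
def lmiMin {n m : ℕ} (A : Matrix (Fin n) (Fin n) ℝ) (B : Matrix (Fin n) (Fin m) ℝ)
    (C : Matrix (Fin m) (Fin n) ℝ) (D : Matrix (Fin m) (Fin m) ℝ)
    (P : Matrix (Fin n) (Fin n) ℝ) (ζ : ℝ) : Matrix (Fin n ⊕ Fin m) (Fin n ⊕ Fin m) ℝ :=
  Matrix.fromBlocks (Aᵀ * P * A - P - Cᵀ * C) (Aᵀ * P * B - Cᵀ * D)
    (Bᵀ * P * A - Dᵀ * C) (Bᵀ * P * B - Dᵀ * D + ζ ^ 2 • (1 : Matrix (Fin m) (Fin m) ℝ))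

/-- Persistency of excitation of order L of the input data (u_k)_{k=0}^{N-1}. -/
def PersistentlyExciting (m N L : ℕ) (u : ℕ → Fin m → ℝ) : Prop :=
  (Matrix.of fun (p : Fin L × Fin m) (j : Fin (N - L + 1)) => u ((p.1 : ℕ) + (j : ℕ)) p.2).rank
    = m * L

/-- (u,y) is an input-output trajectory of (A,B,C,D) of length N. -/
def IsTrajectory {n m : ℕ} (A : Matrix (Fin n) (Fin n) ℝ) (B : Matrix (Fin n) (Fin m) ℝ)
    (C : Matrix (Fin m) (Fin n) ℝ) (D : Matrix (Fin m) (Fin m) ℝ) (N : ℕ)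
    (u y : ℕ → Fin m → ℝ) : Prop :=
  ∃ x : ℕ → Fin n → ℝ, ∀ k < N,
    x (k + 1) = A.mulVec (x k) + B.mulVec (u k) ∧ y k = C.mulVec (x k) + D.mulVec (u k)

/-- Index type for the extended state ξ (u-block followed by y-block). -/
abbrev rindex (l m : ℕ) := (Fin l × Fin m) ⊕ (Fin l × Fin m)

/-- The extended state ξ_k = (u_{k-l}, …, u_{k-1}, y_{k-l}, …, y_{k-1}). -/
def xi {m : ℕ} (l : ℕ) (u y : ℕ → Fin m → ℝ) (k : ℕ) : rindex l m → ℝ :=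
  Sum.elim (fun p => u (k - l + (p.1 : ℕ)) p.2) (fun p => y (k - l + (p.1 : ℕ)) p.2)

def XiMat {m : ℕ} (l N : ℕ) (u y : ℕ → Fin m → ℝ) : Matrix (rindex l m) (Fin (N - l)) ℝ :=
  Matrix.of fun r j => xi l u y (l + (j : ℕ)) r

def XiPlus {m : ℕ} (l N : ℕ) (u y : ℕ → Fin m → ℝ) : Matrix (rindex l m) (Fin (N - l)) ℝ :=
  Matrix.of fun r j => xi l u y (l + 1 + (j : ℕ)) r

def UXi (m l N : ℕ) (u : ℕ → Fin m → ℝ) : Matrix (Fin m) (Fin (N - l)) ℝ :=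
  Matrix.of fun a j => u (l + (j : ℕ)) a

/-- Membership of a noise matrix V in the noise set 𝒱. -/
def inNoiseSet {r mv : ℕ} (Q : Matrix (Fin r) (Fin r) ℝ) (S : Matrix (Fin r) (Fin mv) ℝ)
    (R : Matrix (Fin mv) (Fin mv) ℝ) (V : Matrix (Fin mv) (Fin r) ℝ) : Prop :=
  IsPosSemidefR ((Matrix.fromRows Vᵀ (1 : Matrix (Fin mv) (Fin mv) ℝ))ᵀ
    * Matrix.fromBlocks Q S Sᵀ R * Matrix.fromRows Vᵀ (1 : Matrix (Fin mv) (Fin mv) ℝ))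

/-- The data matrix M = [[(Ξ; U_Ξ), 0], [Y_Ξ, I]]. -/
def Mdata {m : ℕ} (l N : ℕ) (u y : ℕ → Fin m → ℝ) :
    Matrix ((rindex l m ⊕ Fin m) ⊕ Fin m) (Fin (N - l) ⊕ Fin m) ℝ :=
  Matrix.fromBlocks (Matrix.fromRows (XiMat l N u y) (UXi m l N u)) 0 (UXi m l N y) 1

/-- The noise-weight matrix W = [[Q, S Bᵥᵀ], [Bᵥ Sᵀ, Bᵥ R Bᵥᵀ]]. -/
def Wmat {r m mv : ℕ} (Q : Matrix (Fin r) (Fin r) ℝ) (S : Matrix (Fin r) (Fin mv) ℝ)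
    (R : Matrix (Fin mv) (Fin mv) ℝ) (Bv : Matrix (Fin m) (Fin mv) ℝ) :
    Matrix (Fin r ⊕ Fin m) (Fin r ⊕ Fin m) ℝ :=
  Matrix.fromBlocks Q (S * Bvᵀ) (Bv * Sᵀ) (Bv * R * Bvᵀ)

/-- The matrix [[Q̄, S̄], [S̄ᵀ, R̄]] = M W Mᵀ. -/
def QSRbar {m mv : ℕ} (l N : ℕ) (u y : ℕ → Fin m → ℝ)
    (Q : Matrix (Fin (N - l)) (Fin (N - l)) ℝ) (S : Matrix (Fin (N - l)) (Fin mv) ℝ)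
    (R : Matrix (Fin mv) (Fin mv) ℝ) (Bv : Matrix (Fin m) (Fin mv) ℝ) :
    Matrix ((rindex l m ⊕ Fin m) ⊕ Fin m) ((rindex l m ⊕ Fin m) ⊕ Fin m) ℝ :=
  Mdata l N u y * Wmat Q S R Bv * (Mdata l N u y)ᵀ

/-- The second block row ((Ã; 0), (B̃; 0), (0; I)) of the matrix G, where Ã, B̃ are the
block-shift matrices of the difference-operator representation: it maps (ξ, u, w) to the
vector ξ₊ whose u-block and y-block are shifted, with u in the slot for `u_k` and w in the
slot for `y_k`. -/
def Kshift (l m : ℕ) : Matrix (rindex l m) ((rindex l m ⊕ Fin m) ⊕ Fin m) ℝ :=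
  Matrix.of fun r c =>
    match r, c with
    | .inl (i, a), .inl (.inl (.inl (i', a'))) =>
        if (i : ℕ) + 1 = (i' : ℕ) ∧ a = a' then 1 else 0
    | .inl (i, a), .inl (.inr a') => if (i : ℕ) + 1 = l ∧ a = a' then 1 else 0
    | .inr (i, a), .inl (.inl (.inr (i', a'))) =>
        if (i : ℕ) + 1 = (i' : ℕ) ∧ a = a' then 1 else 0
    | .inr (i, a), .inr a' => if (i : ℕ) + 1 = l ∧ a = a' then 1 else 0
    | _, _ => 0

/-- The matrix G with block rows (I,0,0), ((Ã;0),(B̃;0),(0;I)), (0,I,0), (0,0,I). -/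
def Gmat (l m : ℕ) :
    Matrix ((rindex l m ⊕ rindex l m) ⊕ (Fin m ⊕ Fin m)) ((rindex l m ⊕ Fin m) ⊕ Fin m) ℝ :=
  Matrix.fromRows
    (Matrix.fromRows
      (Matrix.fromCols (Matrix.fromCols 1 0) 0)
      (Kshift l m))
    (Matrix.fromRows
      (Matrix.fromCols (Matrix.fromCols 0 1) 0)
      (Matrix.fromCols (Matrix.fromCols 0 0) 1))

/-- The block-diagonal multiplier diag(−P, P, Λ, Ψ). -/
def PhiMat {l m : ℕ} (P : Matrix (rindex l m) (rindex l m) ℝ) (Λ Ψ : Matrix (Fin m) (Fin m) ℝ) :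
    Matrix ((rindex l m ⊕ rindex l m) ⊕ (Fin m ⊕ Fin m))
      ((rindex l m ⊕ rindex l m) ⊕ (Fin m ⊕ Fin m)) ℝ :=
  Matrix.fromBlocks (Matrix.fromBlocks (-P) 0 0 P) 0 0 (Matrix.fromBlocks Λ 0 0 Ψ)

theorem dotProduct_mul_mul_transpose_mulVec {a b : Type*} [Fintype a] [Fintype b]
    (M : Matrix a b ℝ) (W : Matrix b b ℝ) (x : a → ℝ) :
    x ⬝ᵥ (M * W * Mᵀ) *ᵥ x = (Mᵀ *ᵥ x) ⬝ᵥ W *ᵥ (Mᵀ *ᵥ x) := by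
  rw [← mulVec_mulVec, ← mulVec_mulVec, dotProduct_mulVec, ← mulVec_transpose]

theorem dotProduct_transpose_mul_mul_mulVec {a b : Type*} [Fintype a] [Fintype b]
    (G : Matrix a b ℝ) (W : Matrix a a ℝ) (x : b → ℝ) :
    x ⬝ᵥ (Gᵀ * W * G) *ᵥ x = (G *ᵥ x) ⬝ᵥ W *ᵥ (G *ᵥ x) := by
  simpa using dotProduct_mul_mul_transpose_mulVec Gᵀ W x

/-- The dualization lemma of Scherer and Weiland. -/
theorem dotProduct_inv_mulVec_graph_nonpos {p q : Type*} [Fintype p] [Fintype q]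
    [DecidableEq p] [DecidableEq q]
    (N : Matrix (p ⊕ q) (p ⊕ q) ℝ) (hsym : N.IsSymm) (hN : IsUnit N.det) (K : Matrix q p ℝ)
    (hneg : ∀ c : p → ℝ, Sum.elim c 0 ⬝ᵥ N *ᵥ Sum.elim c 0 ≤ 0)
    (hpos : ∀ z : q → ℝ, 0 ≤ Sum.elim (-(z ᵥ* K)) z ⬝ᵥ N *ᵥ Sum.elim (-(z ᵥ* K)) z)
    (c : p → ℝ) :
    Sum.elim c (K *ᵥ c) ⬝ᵥ N⁻¹ *ᵥ Sum.elim c (K *ᵥ c) ≤ 0 := by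
  set d := N⁻¹ *ᵥ Sum.elim c (K *ᵥ c)
  have hNd : N *ᵥ d = Sum.elim c (K *ᵥ c) := by
    rw [mulVec_mulVec, mul_nonsing_inv _ hN, one_mulVec]
  -- split `d` into a first-block part and a graph part
  set z : q → ℝ := fun j => d (Sum.inr j)
  set g := Sum.elim (-(z ᵥ* K)) z
  set e := Sum.elim (fun i => d (Sum.inl i) + (z ᵥ* K) i) (0 : q → ℝ)
  have hd : d = e + g := by
    funext r; cases r <;> simp [e, g, z]
  have hgd : g ⬝ᵥ N *ᵥ d = 0 := by
    rw [hNd, sumElim_dotProduct_sumElim, neg_dotProduct, dotProduct_mulVec]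
    ring
  have hsymm : e ⬝ᵥ N *ᵥ g = g ⬝ᵥ N *ᵥ e := by
    rw [dotProduct_mulVec, ← mulVec_transpose, hsym.eq, dotProduct_comm]
  have hexp : d ⬝ᵥ N *ᵥ d = e ⬝ᵥ N *ᵥ e - g ⬝ᵥ N *ᵥ g := by
    rw [hd] at hgd ⊢
    simp only [mulVec_add, dotProduct_add, add_dotProduct] at hgd ⊢
    linarith
  calc Sum.elim c (K *ᵥ c) ⬝ᵥ d = (N *ᵥ d) ⬝ᵥ d := by rw [hNd]
    _ = d ⬝ᵥ N *ᵥ d := dotProduct_comm _ _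
    _ ≤ 0 := by rw [hexp]; linarith [hneg (fun i => d (Sum.inl i) + (z ᵥ* K) i), hpos z]

def shiftCol (l m : ℕ) : rindex l m → (rindex l m ⊕ Fin m) ⊕ Fin m
  | .inl (i, a) =>
    if h : (i : ℕ) + 1 < l then .inl (.inl (.inl (⟨i + 1, h⟩, a))) else .inl (.inr a)
  | .inr (i, a) =>
    if h : (i : ℕ) + 1 < l then .inl (.inl (.inr (⟨i + 1, h⟩, a))) else .inr a

theorem kshift_apply (l m : ℕ) (r : rindex l m) (c : (rindex l m ⊕ Fin m) ⊕ Fin m) :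
    Kshift l m r c = if c = shiftCol l m r then 1 else 0 := by
  rcases r with ⟨i, a⟩ | ⟨i, a⟩ <;> rcases c with (((⟨i', a'⟩ | ⟨i', a'⟩) | a') | a') <;>
    simp [Kshift, shiftCol, Fin.ext_iff, eq_comm, and_comm] <;> grind

theorem kshift_mulVec_apply (l m : ℕ) (x : (rindex l m ⊕ Fin m) ⊕ Fin m → ℝ) (r : rindex l m) :
    (Kshift l m *ᵥ x) r = x (shiftCol l m r) := by
  simp [mulVec, dotProduct, kshift_apply]

theorem kshift_mulVec_xi {m l k : ℕ} (u y : ℕ → Fin m → ℝ) (hk : l ≤ k) :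
    Kshift l m *ᵥ Sum.elim (Sum.elim (xi l u y k) (u k)) (y k) = xi l u y (k + 1) := by
  funext r
  rw [kshift_mulVec_apply]
  rcases r with ⟨i, a⟩ | ⟨i, a⟩ <;> by_cases h : (i : ℕ) + 1 < l <;>
    simp only [shiftCol, xi, h, dite_true, dite_false, Sum.elim_inl, Sum.elim_inr] <;>
    congr 1 <;> omega

/-- The matrix `(C̃, D̃) = (B₁ ⋯ B_l, -A₁ ⋯ -A_l, D)` of the difference-operator
representation. -/
def diffOpMat {m l : ℕ} (Amats Bmats : Fin l → Matrix (Fin m) (Fin m) ℝ)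
    (D : Matrix (Fin m) (Fin m) ℝ) : Matrix (Fin m) (rindex l m ⊕ Fin m) ℝ :=
  fromCols (of fun a => Sum.elim (fun p => Bmats p.1 a p.2) (fun p => -Amats p.1 a p.2)) D

theorem diffOpMat_mulVec_xi {m l : ℕ} (Amats Bmats : Fin l → Matrix (Fin m) (Fin m) ℝ)
    (D : Matrix (Fin m) (Fin m) ℝ) (u y : ℕ → Fin m → ℝ) (k : ℕ) :
    diffOpMat Amats Bmats D *ᵥ Sum.elim (xi l u y k) (u k) =
      -(∑ i : Fin l, Amats i *ᵥ y (k - l + i)) + D *ᵥ u k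
        + ∑ i : Fin l, Bmats i *ᵥ u (k - l + i) := by
  funext a
  simp only [diffOpMat, fromCols_mulVec_sumElim, Pi.add_apply, Pi.neg_apply, Finset.sum_apply]
  simp [mulVec, dotProduct, xi, Fintype.sum_sum_type, Fintype.sum_prod_type]
  ring

theorem gmat_mulVec {l m : ℕ} (ξ : rindex l m → ℝ) (uu yy : Fin m → ℝ) :
    Gmat l m *ᵥ Sum.elim (Sum.elim ξ uu) yy =
      Sum.elim (Sum.elim ξ (Kshift l m *ᵥ Sum.elim (Sum.elim ξ uu) yy)) (Sum.elim uu yy) := by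
  simp [Gmat, fromRows_mulVec, fromBlocks_mulVec]

theorem dotProduct_gmat_phiMat_mulVec {l m : ℕ} (P : Matrix (rindex l m) (rindex l m) ℝ)
    (Λ Ψ : Matrix (Fin m) (Fin m) ℝ) (ξ : rindex l m → ℝ) (uu yy : Fin m → ℝ) :
    let x := Sum.elim (Sum.elim ξ uu) yy
    x ⬝ᵥ ((Gmat l m)ᵀ * PhiMat P Λ Ψ * Gmat l m) *ᵥ x =
      (Kshift l m *ᵥ x) ⬝ᵥ P *ᵥ (Kshift l m *ᵥ x) - ξ ⬝ᵥ P *ᵥ ξ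
        + uu ⬝ᵥ Λ *ᵥ uu + yy ⬝ᵥ Ψ *ᵥ yy := by
  intro x
  rw [dotProduct_transpose_mul_mul_mulVec, gmat_mulVec]
  simp only [PhiMat, fromBlocks_mulVec, Sum.elim_comp_inl, Sum.elim_comp_inr, zero_mulVec,
    add_zero, zero_add, sumElim_dotProduct_sumElim, neg_mulVec, dotProduct_neg]
  ring

section DataMatrices

variable {m mv l N : ℕ} (u y : ℕ → Fin m → ℝ) (Q : Matrix (Fin (N - l)) (Fin (N - l)) ℝ)
  (S : Matrix (Fin (N - l)) (Fin mv) ℝ) (R : Matrix (Fin mv) (Fin mv) ℝ)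
  (Bv : Matrix (Fin m) (Fin mv) ℝ)

theorem wmat_eq_conj : Wmat Q S R Bv =
    fromBlocks (1 : Matrix (Fin (N - l)) (Fin (N - l)) ℝ) 0 0 Bv * fromBlocks Q S Sᵀ R
      * (fromBlocks (1 : Matrix (Fin (N - l)) (Fin (N - l)) ℝ) 0 0 Bv)ᵀ := by
  simp [Wmat, fromBlocks_transpose, fromBlocks_multiply, Matrix.mul_assoc]

theorem qsrbar_isSymm (hQ : Q.IsSymm) (hR : R.IsSymm) : (QSRbar l N u y Q S R Bv).IsSymm := by
  have hW : (Wmat Q S R Bv).IsSymm := by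
    rw [wmat_eq_conj]
    simp [IsSymm, Matrix.transpose_mul, fromBlocks_transpose, hQ.eq, hR.eq, Matrix.mul_assoc]
  simp [IsSymm, QSRbar, Matrix.transpose_mul, hW.eq, Matrix.mul_assoc]

theorem qsrbar_nonpos_inl (hQ : ∀ x, x ⬝ᵥ Q *ᵥ x ≤ 0) (c : rindex l m ⊕ Fin m → ℝ) :
    Sum.elim c 0 ⬝ᵥ QSRbar l N u y Q S R Bv *ᵥ Sum.elim c 0 ≤ 0 := by
  rw [QSRbar, dotProduct_mul_mul_transpose_mulVec, Mdata]
  generalize fromRows (XiMat l N u y) (UXi m l N u) = Z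
  simpa [fromBlocks_transpose, fromBlocks_mulVec, Wmat] using hQ (Zᵀ *ᵥ c)

theorem qsrbar_nonneg_graph (K : Matrix (Fin m) (rindex l m ⊕ Fin m) ℝ)
    (V : Matrix (Fin mv) (Fin (N - l)) ℝ)
    (hdata : UXi m l N y = K * fromRows (XiMat l N u y) (UXi m l N u) + Bv * V)
    (hV : inNoiseSet Q S R V) (z : Fin m → ℝ) :
    0 ≤ Sum.elim (-(z ᵥ* K)) z ⬝ᵥ QSRbar l N u y Q S R Bv *ᵥ Sum.elim (-(z ᵥ* K)) z := by
  have hM : (Mdata l N u y)ᵀ *ᵥ Sum.elim (-(z ᵥ* K)) z = Sum.elim (Vᵀ *ᵥ (Bvᵀ *ᵥ z)) z := by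
    rw [Mdata, hdata]
    generalize fromRows (XiMat l N u y) (UXi m l N u) = Z
    simp only [fromBlocks_transpose, fromBlocks_mulVec, Matrix.transpose_add, add_mulVec,
      Matrix.transpose_mul, ← mulVec_mulVec, mulVec_transpose, Sum.elim_comp_inl, Sum.elim_comp_inr,
      transpose_zero, transpose_one, zero_mulVec, one_mulVec, zero_add, neg_vecMul]
    congr 1
    abel
  have hE : (fromBlocks (1 : Matrix (Fin (N - l)) (Fin (N - l)) ℝ) 0 0 Bv)ᵀ
      *ᵥ Sum.elim (Vᵀ *ᵥ (Bvᵀ *ᵥ z)) z = fromRows Vᵀ 1 *ᵥ (Bvᵀ *ᵥ z) := by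
    simp [fromBlocks_transpose, fromBlocks_mulVec, fromRows_mulVec]
  have h := hV.2 (Bvᵀ *ᵥ z)
  rw [dotProduct_transpose_mul_mul_mulVec] at h
  rwa [QSRbar, dotProduct_mul_mul_transpose_mulVec, hM, wmat_eq_conj,
    dotProduct_mul_mul_transpose_mulVec, hE]

end DataMatrices

theorem IsNegDef.dotProduct_mulVec_nonpos {k : Type*} [Fintype k] {M : Matrix k k ℝ}
    (hM : IsNegDef M) (x : k → ℝ) : x ⬝ᵥ M *ᵥ x ≤ 0 := by
  by_cases hx : x = 0
  · simp [hx]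
  · exact (hM.2 x hx).le

section NoisyData

variable {m mv l N : ℕ} {u y : ℕ → Fin m → ℝ} {v : ℕ → Fin mv → ℝ}
  {Amats Bmats : Fin l → Matrix (Fin m) (Fin m) ℝ} {D : Matrix (Fin m) (Fin m) ℝ}
  {Bv : Matrix (Fin m) (Fin mv) ℝ}

theorem uXi_eq_diffOpMat_mul_add
    (hdata : ∀ k, l ≤ k → k < N →
      y k = -(∑ i : Fin l, (Amats i).mulVec (y (k - l + (i : ℕ))))
        + D.mulVec (u k) + (∑ i : Fin l, (Bmats i).mulVec (u (k - l + (i : ℕ))))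
        + Bv.mulVec (v k)) :
    UXi m l N y = diffOpMat Amats Bmats D * fromRows (XiMat l N u y) (UXi m l N u)
      + Bv * of fun a (j : Fin (N - l)) => v (l + (j : ℕ)) a := by
  ext a j
  have hcol : (fun r => fromRows (XiMat l N u y) (UXi m l N u) r j) =
      Sum.elim (xi l u y (l + j)) (u (l + j)) := by
    funext r; cases r <;> rfl
  have h := hdata (l + j) (by omega) (by omega)
  rw [← diffOpMat_mulVec_xi, ← hcol] at h
  exact congrFun h a

theorem graph_dotProduct_qsrbar_inv_mulVec_nonpos {Q : Matrix (Fin (N - l)) (Fin (N - l)) ℝ}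
    {S : Matrix (Fin (N - l)) (Fin mv) ℝ} {R : Matrix (Fin mv) (Fin mv) ℝ}
    (hQ : IsNegDef Q) (hR : R.IsSymm)
    (hdata : ∀ k, l ≤ k → k < N →
      y k = -(∑ i : Fin l, (Amats i).mulVec (y (k - l + (i : ℕ))))
        + D.mulVec (u k) + (∑ i : Fin l, (Bmats i).mulVec (u (k - l + (i : ℕ))))
        + Bv.mulVec (v k))
    (hV : inNoiseSet Q S R (of fun a (j : Fin (N - l)) => v (l + (j : ℕ)) a))
    (hinv : IsUnit (QSRbar l N u y Q S R Bv).det) (c : rindex l m ⊕ Fin m → ℝ) :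
    Sum.elim c (diffOpMat Amats Bmats D *ᵥ c) ⬝ᵥ
      (QSRbar l N u y Q S R Bv)⁻¹ *ᵥ Sum.elim c (diffOpMat Amats Bmats D *ᵥ c) ≤ 0 :=
  dotProduct_inv_mulVec_graph_nonpos _ (qsrbar_isSymm u y Q S R Bv hQ.1 hR) hinv _
    (qsrbar_nonpos_inl u y Q S R Bv hQ.dotProduct_mulVec_nonpos)
    (qsrbar_nonneg_graph u y Q S R Bv _ _ (uXi_eq_diffOpMat_mul_add hdata) hV) c

end NoisyData

theorem sum_range_nonpos_of_storage {V s : ℕ → ℝ} (hV0 : V 0 = 0) (hV : ∀ k, 0 ≤ V k)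
    (hstep : ∀ k, V (k + 1) - V k + s k ≤ 0) (n : ℕ) : ∑ k ∈ Finset.range n, s k ≤ 0 := by
  have htel := Finset.sum_range_sub V n
  have hsum : ∑ k ∈ Finset.range n, (V (k + 1) - V k + s k) ≤ 0 :=
    Finset.sum_nonpos fun k _ => hstep k
  rw [Finset.sum_add_distrib, htel, hV0] at hsum
  linarith [hV n]

theorem xi_self_eq_zero {m l : ℕ} {u y : ℕ → Fin m → ℝ} (hu : ∀ k < l, u k = 0)
    (hy : ∀ k < l, y k = 0) : xi l u y l = 0 := by
  funext r
  rcases r with ⟨i, a⟩ | ⟨i, a⟩ <;> simp [xi, hu, hy]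

theorem sum_sq_le_of_lmi {m l : ℕ} (K : Matrix (Fin m) (rindex l m ⊕ Fin m) ℝ)
    (M : Matrix ((rindex l m ⊕ Fin m) ⊕ Fin m) ((rindex l m ⊕ Fin m) ⊕ Fin m) ℝ)
    (hM : ∀ c, Sum.elim c (K *ᵥ c) ⬝ᵥ M *ᵥ Sum.elim c (K *ᵥ c) ≤ 0)
    (ζ : ℝ) (P : Matrix (rindex l m) (rindex l m) ℝ) (hP : ∀ x, 0 ≤ x ⬝ᵥ P *ᵥ x)
    (μ : ℝ) (hμ : 0 ≤ μ)
    (hLMI : ∀ x, x ⬝ᵥ ((Gmat l m)ᵀ * PhiMat P ((ζ ^ 2) • (1 : Matrix (Fin m) (Fin m) ℝ)) (-1)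
      * Gmat l m - μ • M) *ᵥ x ≤ 0)
    {u y : ℕ → Fin m → ℝ} (hu : ∀ k < l, u k = 0) (hy : ∀ k < l, y k = 0)
    (hsys : ∀ k, l ≤ k → y k = K *ᵥ Sum.elim (xi l u y k) (u k)) (n : ℕ) :
    ζ ^ 2 * ∑ k ∈ Finset.range n, u (k + l) ⬝ᵥ u (k + l)
      ≤ ∑ k ∈ Finset.range n, y (k + l) ⬝ᵥ y (k + l) := by
  set V : ℕ → ℝ := fun k => xi l u y (k + l) ⬝ᵥ P *ᵥ xi l u y (k + l)
  suffices ∑ k ∈ Finset.range n, (ζ ^ 2 * (u (k + l) ⬝ᵥ u (k + l)) - y (k + l) ⬝ᵥ y (k + l)) ≤ 0 by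
    rw [Finset.sum_sub_distrib, ← Finset.mul_sum] at this
    linarith
  refine sum_range_nonpos_of_storage (V := V) ?_ (fun k => hP _) (fun k => ?_) n
  · simp [V, xi_self_eq_zero hu hy]
  have hgraph := hM (Sum.elim (xi l u y (k + l)) (u (k + l)))
  have hstep := hLMI (Sum.elim (Sum.elim (xi l u y (k + l)) (u (k + l))) (y (k + l)))
  rw [← hsys _ le_add_self] at hgraph
  rw [sub_mulVec, dotProduct_sub, smul_mulVec, dotProduct_smul, smul_eq_mul,
    dotProduct_gmat_phiMat_mulVec, kshift_mulVec_xi _ _ le_add_self] at hstep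
  simp only [smul_mulVec, one_mulVec, dotProduct_smul, smul_eq_mul, neg_mulVec,
    dotProduct_neg] at hstep
  simp only [V, show k + 1 + l = k + l + 1 by omega]
  nlinarith [mul_nonneg hμ (neg_nonneg.mpr hgraph)]

section ComplexSignals

variable {m : ℕ}

theorem act_act {a b c : ℕ} (M : Matrix (Fin a) (Fin b) ℝ) (N : Matrix (Fin b) (Fin c) ℝ)
    (v : Evec c) : act M (act N v) = act (M * N) v := by
  simp only [act, toLpLin_apply, mulVec_mulVec]
  congr
  exact (Matrix.map_mul (f := Complex.ofRealHom)).symm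

theorem act_zero {a b : ℕ} (M : Matrix (Fin a) (Fin b) ℝ) : act M 0 = 0 :=
  map_zero _

theorem act_sum {a b : ℕ} {ι : Type*} (M : Matrix (Fin a) (Fin b) ℝ) (s : Finset ι)
    (f : ι → Evec b) : act M (∑ i ∈ s, f i) = ∑ i ∈ s, act M (f i) :=
  map_sum _ _ _

def coordwise (φ : ℂ →ₗ[ℝ] ℝ) : Evec m →ₗ[ℝ] (Fin m → ℝ) where
  toFun w a := φ (w a)
  map_add' _ _ := by funext a; simp
  map_smul' _ _ := by funext a; simp [-Complex.real_smul]

theorem coordwise_act {a b : ℕ} (φ : ℂ →ₗ[ℝ] ℝ) (M : Matrix (Fin a) (Fin b) ℝ) (w : Evec b) :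
    coordwise φ (act M w) = M *ᵥ coordwise φ w := by
  funext i
  simp [coordwise, act, mulVec, dotProduct, ← Complex.real_smul]

theorem norm_sq_eq_coordwise (w : Evec m) :
    ‖w‖ ^ 2 = coordwise Complex.reLm w ⬝ᵥ coordwise Complex.reLm w
      + coordwise Complex.imLm w ⬝ᵥ coordwise Complex.imLm w := by
  rw [EuclideanSpace.norm_eq, Real.sq_sqrt (by positivity), dotProduct, dotProduct,
    ← Finset.sum_add_distrib]
  simp [coordwise, Complex.sq_norm, Complex.normSq_apply]

end ComplexSignals

section System

variable {n m : ℕ} (A : Matrix (Fin n) (Fin n) ℝ) (B : Matrix (Fin n) (Fin m) ℝ)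
  (C : Matrix (Fin m) (Fin n) ℝ) (D : Matrix (Fin m) (Fin m) ℝ)

def state (u : ℕ → Evec m) (k : ℕ) : Evec n :=
  ∑ i ∈ Finset.range k, act (A ^ (k - 1 - i) * B) (u i)

theorem state_succ (u : ℕ → Evec m) (k : ℕ) :
    state A B u (k + 1) = act A (state A B u k) + act B (u k) := by
  rw [state, Finset.sum_range_succ, state, act_sum]
  simp only [act_act, ← Matrix.mul_assoc, ← pow_succ', Nat.add_sub_cancel, Nat.sub_self,
    pow_zero, Matrix.one_mul]
  congr 1
  refine Finset.sum_congr rfl fun i hi => ?_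
  rw [Finset.mem_range] at hi
  rw [show k - 1 - i + 1 = k - i by omega]

theorem output_eq_act_state (u : ℕ → Evec m) (k : ℕ) :
    output A B C D u k = act C (state A B u k) + act D (u k) := by
  simp only [output, state, act_sum, act_act, Matrix.mul_assoc, add_comm]

def padZeros (l : ℕ) (u : ℕ → Evec m) (k : ℕ) : Evec m :=
  if k < l then 0 else u (k - l)

theorem output_padZeros_add (l : ℕ) (u : ℕ → Evec m) (k : ℕ) :
    output A B C D (padZeros l u) (k + l) = output A B C D u k := by
  rw [output, output, add_comm k l, Finset.sum_range_add, Finset.sum_eq_zero, zero_add]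
  · simp only [padZeros, if_neg (Nat.not_lt.mpr (Nat.le_add_right l _)), Nat.add_sub_cancel_left]
    congr 1
    refine Finset.sum_congr rfl fun i _ => ?_
    rw [show l + k - 1 - (l + i) = k - 1 - i by omega]
  · intro i hi
    simp [padZeros, Finset.mem_range.mp hi, act_zero]

theorem output_padZeros_of_lt {l k : ℕ} (u : ℕ → Evec m) (hk : k < l) :
    output A B C D (padZeros l u) k = 0 := by
  rw [output, Finset.sum_eq_zero]
  · simp [padZeros, hk, act_zero]
  · intro i hi
    simp [padZeros, show i < l by simp at hi; omega, act_zero]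

end System

theorem coordwise_output_eq_diffOpMat_mulVec {n m l : ℕ} {A : Matrix (Fin n) (Fin n) ℝ}
    {B : Matrix (Fin n) (Fin m) ℝ} {C : Matrix (Fin m) (Fin n) ℝ} {D : Matrix (Fin m) (Fin m) ℝ}
    {Amats Bmats : Fin l → Matrix (Fin m) (Fin m) ℝ}
    (hdiff : ∀ (x : ℕ → Evec n) (uc yc : ℕ → Evec m),
      (∀ k, x (k + 1) = act A (x k) + act B (uc k)) →
      (∀ k, yc k = act C (x k) + act D (uc k)) →
      ∀ k, l ≤ k →
        yc k = -(∑ i : Fin l, act (Amats i) (yc (k - l + (i : ℕ))))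
          + act D (uc k) + ∑ i : Fin l, act (Bmats i) (uc (k - l + (i : ℕ))))
    (φ : ℂ →ₗ[ℝ] ℝ) (u : ℕ → Evec m) {k : ℕ} (hk : l ≤ k) :
    coordwise φ (output A B C D u k) = diffOpMat Amats Bmats D *ᵥ
      Sum.elim (xi l (fun j => coordwise φ (u j)) (fun j => coordwise φ (output A B C D u j)) k)
        (coordwise φ (u k)) := by
  rw [diffOpMat_mulVec_xi, hdiff (state A B u) u _ (state_succ A B u)
    (output_eq_act_state A B C D u) k hk]
  simp only [map_add, map_neg, map_sum, coordwise_act]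

/-- The real and imaginary parts of a complex signal are trajectories of the same real system;
prepending `l` zeros to the input makes the initial extended state vanish. -/
theorem sum_norm_sq_le_output {n m l : ℕ} {A : Matrix (Fin n) (Fin n) ℝ}
    {B : Matrix (Fin n) (Fin m) ℝ} {C : Matrix (Fin m) (Fin n) ℝ} {D : Matrix (Fin m) (Fin m) ℝ}
    {Amats Bmats : Fin l → Matrix (Fin m) (Fin m) ℝ}
    (hdiff : ∀ (x : ℕ → Evec n) (uc yc : ℕ → Evec m),
      (∀ k, x (k + 1) = act A (x k) + act B (uc k)) →
      (∀ k, yc k = act C (x k) + act D (uc k)) →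
      ∀ k, l ≤ k →
        yc k = -(∑ i : Fin l, act (Amats i) (yc (k - l + (i : ℕ))))
          + act D (uc k) + ∑ i : Fin l, act (Bmats i) (uc (k - l + (i : ℕ))))
    (M : Matrix ((rindex l m ⊕ Fin m) ⊕ Fin m) ((rindex l m ⊕ Fin m) ⊕ Fin m) ℝ)
    (hM : ∀ c, Sum.elim c (diffOpMat Amats Bmats D *ᵥ c) ⬝ᵥ
      M *ᵥ Sum.elim c (diffOpMat Amats Bmats D *ᵥ c) ≤ 0)
    (ζ : ℝ) (P : Matrix (rindex l m) (rindex l m) ℝ) (hP : ∀ x, 0 ≤ x ⬝ᵥ P *ᵥ x)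
    (μ : ℝ) (hμ : 0 ≤ μ)
    (hLMI : ∀ x, x ⬝ᵥ ((Gmat l m)ᵀ * PhiMat P ((ζ ^ 2) • (1 : Matrix (Fin m) (Fin m) ℝ)) (-1)
      * Gmat l m - μ • M) *ᵥ x ≤ 0)
    (u : ℕ → Evec m) (K : ℕ) :
    ζ ^ 2 * ∑ k ∈ Finset.range K, ‖u k‖ ^ 2
      ≤ ∑ k ∈ Finset.range K, ‖output A B C D u k‖ ^ 2 := by
  have hpart : ∀ φ : ℂ →ₗ[ℝ] ℝ, ζ ^ 2 * ∑ k ∈ Finset.range K, coordwise φ (u k) ⬝ᵥ coordwise φ (u k)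
      ≤ ∑ k ∈ Finset.range K,
        coordwise φ (output A B C D u k) ⬝ᵥ coordwise φ (output A B C D u k) := by
    intro φ
    have h := sum_sq_le_of_lmi _ M hM ζ P hP μ hμ hLMI
      (u := fun k => coordwise φ (padZeros l u k))
      (y := fun k => coordwise φ (output A B C D (padZeros l u) k))
      (fun k hk => by simp [padZeros, hk])
      (fun k hk => by simp [output_padZeros_of_lt _ _ _ _ _ hk])
      (fun k hk => coordwise_output_eq_diffOpMat_mulVec hdiff φ _ hk) K
    simpa [output_padZeros_add, padZeros] using h
  simp only [norm_sq_eq_coordwise, Finset.sum_add_distrib, mul_add]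
  exact add_le_add (hpart _) (hpart _)

theorem enorm2_eq_of_support {m : ℕ} (f : ℕ → Evec m) (K : ℕ) (hf : ∀ k, K ≤ k → f k = 0) :
    enorm2 f = ENNReal.ofReal (√(∑ k ∈ Finset.range K, ‖f k‖ ^ 2)) := by
  have hsum : ∑' k, (‖f k‖₊ : ℝ≥0∞) ^ 2 = ENNReal.ofReal (∑ k ∈ Finset.range K, ‖f k‖ ^ 2) := by
    rw [tsum_eq_sum (s := Finset.range K) fun k hk => by simp [hf k (by simpa using hk)],
      ENNReal.ofReal_sum_of_nonneg fun k _ => by positivity]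
    refine Finset.sum_congr rfl fun k _ => ?_
    rw [ENNReal.ofReal_pow (norm_nonneg _), ofReal_norm, enorm_eq_nnnorm]
  rw [enorm2, hsum, Real.sqrt_eq_rpow,
    ← ENNReal.ofReal_rpow_of_nonneg (by positivity) (by norm_num)]

theorem ofReal_le_enorm2_div {m : ℕ} {f g : ℕ → Evec m} {K : ℕ} (hf : ∀ k, K ≤ k → f k = 0)
    (hg : ∀ k, K ≤ k → g k = 0) (hf0 : f ≠ 0) {ζ : ℝ}
    (h : ζ ^ 2 * ∑ k ∈ Finset.range K, ‖f k‖ ^ 2 ≤ ∑ k ∈ Finset.range K, ‖g k‖ ^ 2) :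
    ENNReal.ofReal ζ ≤ enorm2 g / enorm2 f := by
  rcases le_or_gt ζ 0 with hζ | hζ
  · simp [ENNReal.ofReal_of_nonpos hζ]
  have hpos : 0 < ∑ k ∈ Finset.range K, ‖f k‖ ^ 2 := by
    obtain ⟨k, hk⟩ := Function.ne_iff.mp hf0
    have hkK : k < K := not_le.mp fun hKk => hk (hf k hKk)
    exact Finset.sum_pos' (fun i _ => by positivity) ⟨k, by simpa using hkK, by positivity⟩
  rw [enorm2_eq_of_support f K hf, enorm2_eq_of_support g K hg,
    ENNReal.le_div_iff_mul_le (Or.inl (by simpa using hpos)) (Or.inl ENNReal.ofReal_ne_top),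
    ← ENNReal.ofReal_mul hζ.le]
  refine ENNReal.ofReal_le_ofReal ?_
  calc ζ * √(∑ k ∈ Finset.range K, ‖f k‖ ^ 2)
      = √(ζ ^ 2 * ∑ k ∈ Finset.range K, ‖f k‖ ^ 2) := by
        rw [Real.sqrt_mul (by positivity), Real.sqrt_sq hζ.le]
    _ ≤ _ := Real.sqrt_le_sqrt h

theorem stmt16_general {n m mv : ℕ}
    (A : Matrix (Fin n) (Fin n) ℝ) (B : Matrix (Fin n) (Fin m) ℝ)
    (C : Matrix (Fin m) (Fin n) ℝ) (D : Matrix (Fin m) (Fin m) ℝ)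
    (l N : ℕ)
    (Amats Bmats : Fin l → Matrix (Fin m) (Fin m) ℝ)
    -- the true system admits the difference-operator representation
    -- y_k = −A_l y_{k-1} − ⋯ − A_1 y_{k-l} + D u_k + B_l u_{k-1} + ⋯ + B_1 u_{k-l}:
    (hdiff : ∀ (x : ℕ → Evec n) (uc yc : ℕ → Evec m),
      (∀ k, x (k + 1) = act A (x k) + act B (uc k)) →
      (∀ k, yc k = act C (x k) + act D (uc k)) →
      ∀ k, l ≤ k →
        yc k = -(∑ i : Fin l, act (Amats i) (yc (k - l + (i : ℕ))))
          + act D (uc k) + ∑ i : Fin l, act (Bmats i) (uc (k - l + (i : ℕ))))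
    (Bv : Matrix (Fin m) (Fin mv) ℝ)
    (Q : Matrix (Fin (N - l)) (Fin (N - l)) ℝ) (S : Matrix (Fin (N - l)) (Fin mv) ℝ)
    (R : Matrix (Fin mv) (Fin mv) ℝ) (hQ : IsNegDef Q) (hR : R.IsSymm)
    (u y : ℕ → Fin m → ℝ) (v : ℕ → Fin mv → ℝ)
    -- the measured data is generated by the true system corrupted by the noise v:
    (hdata : ∀ k, l ≤ k → k < N →
      y k = -(∑ i : Fin l, (Amats i).mulVec (y (k - l + (i : ℕ))))
        + D.mulVec (u k) + (∑ i : Fin l, (Bmats i).mulVec (u (k - l + (i : ℕ))))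
        + Bv.mulVec (v k))
    -- the noise matrix V* = (v_l ⋯ v_{N-1}) belongs to 𝒱:
    (hV : inNoiseSet Q S R (Matrix.of fun a (j : Fin (N - l)) => v (l + (j : ℕ)) a))
    (hinvQSR : IsUnit (QSRbar l N u y Q S R Bv).det)
    (ζ : ℝ)
    (P : Matrix (rindex l m) (rindex l m) ℝ) (hP : IsPosSemidefR P) (μ : ℝ) (hμ : 0 ≤ μ)
    (hLMI : IsNegSemidef
      ((Gmat l m)ᵀ * PhiMat P ((ζ ^ 2) • (1 : Matrix (Fin m) (Fin m) ℝ)) (-1) * Gmat l m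
        - μ • (QSRbar l N u y Q S R Bv)⁻¹)) :
    ∀ L : ℝ≥0∞,
      Tendsto (fun τ : ℕ => minGain (ltwoTau m (τ + 1)) (TtauMap A B C D (τ + 1))) atTop (𝓝 L) →
        ENNReal.ofReal ζ ≤ L := by
  intro L hL
  have henergy := sum_norm_sq_le_output hdiff _
    (graph_dotProduct_qsrbar_inv_mulVec_nonpos hQ hR hdata hV hinvQSR) ζ P hP.2 μ hμ hLMI.2
  refine ge_of_tendsto' hL fun τ => le_iInf₂ fun w ⟨hw, hw0⟩ => ?_
  refine ofReal_le_enorm2_div (g := TtauMap A B C D (τ + 1) w) (K := τ + 2)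
    (fun k hk => hw k (by omega)) (fun k hk => if_neg (by omega)) hw0 ?_
  refine (henergy w (τ + 2)).trans_eq (Finset.sum_congr rfl fun k hk => ?_)
  rw [TtauMap, if_pos (by simp at hk; omega)]

/-- Robust data-driven lower bound on `lim_{τ→∞} γ₋(T^τ)` from noisy data. -/
theorem stmt16 {n m mv : ℕ} (hn : 1 ≤ n) (hm : 1 ≤ m) (hmv : 1 ≤ mv)
    (A : Matrix (Fin n) (Fin n) ℝ) (B : Matrix (Fin n) (Fin m) ℝ)
    (C : Matrix (Fin m) (Fin n) ℝ) (D : Matrix (Fin m) (Fin m) ℝ)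
    (l N : ℕ) (hl : 1 ≤ l) (hN : 1 ≤ N) (hlag : lag A C ≤ l)
    (Amats Bmats : Fin l → Matrix (Fin m) (Fin m) ℝ)
    -- the true system admits the difference-operator representation
    -- y_k = −A_l y_{k-1} − ⋯ − A_1 y_{k-l} + D u_k + B_l u_{k-1} + ⋯ + B_1 u_{k-l}:
    (hdiff : ∀ (x : ℕ → Evec n) (uc yc : ℕ → Evec m),
      (∀ k, x (k + 1) = act A (x k) + act B (uc k)) →
      (∀ k, yc k = act C (x k) + act D (uc k)) →
      ∀ k, l ≤ k →
        yc k = -(∑ i : Fin l, act (Amats i) (yc (k - l + (i : ℕ))))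
          + act D (uc k) + ∑ i : Fin l, act (Bmats i) (uc (k - l + (i : ℕ))))
    (Bv : Matrix (Fin m) (Fin mv) ℝ)
    (Q : Matrix (Fin (N - l)) (Fin (N - l)) ℝ) (S : Matrix (Fin (N - l)) (Fin mv) ℝ)
    (R : Matrix (Fin mv) (Fin mv) ℝ) (hQ : IsNegDef Q) (hR : R.IsSymm)
    (u y : ℕ → Fin m → ℝ) (v : ℕ → Fin mv → ℝ)
    -- the measured data is generated by the true system corrupted by the noise v:
    (hdata : ∀ k, l ≤ k → k < N →
      y k = -(∑ i : Fin l, (Amats i).mulVec (y (k - l + (i : ℕ))))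
        + D.mulVec (u k) + (∑ i : Fin l, (Bmats i).mulVec (u (k - l + (i : ℕ))))
        + Bv.mulVec (v k))
    -- the noise matrix V* = (v_l ⋯ v_{N-1}) belongs to 𝒱:
    (hV : inNoiseSet Q S R (Matrix.of fun a (j : Fin (N - l)) => v (l + (j : ℕ)) a))
    (hinvQSR : IsUnit (QSRbar l N u y Q S R Bv).det)
    (ζ : ℝ) (hζ : 0 ≤ ζ)
    (P : Matrix (rindex l m) (rindex l m) ℝ) (hP : IsPosSemidefR P) (μ : ℝ) (hμ : 0 ≤ μ)
    (hLMI : IsNegSemidef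
      ((Gmat l m)ᵀ * PhiMat P ((ζ ^ 2) • (1 : Matrix (Fin m) (Fin m) ℝ)) (-1) * Gmat l m
        - μ • (QSRbar l N u y Q S R Bv)⁻¹)) :
    ∀ L : ℝ≥0∞,
      Tendsto (fun τ : ℕ => minGain (ltwoTau m (τ + 1)) (TtauMap A B C D (τ + 1))) atTop (𝓝 L) →
        ENNReal.ofReal ζ ≤ L :=
  stmt16_general A B C D l N Amats Bmats hdiff Bv Q S R hQ hR u y v hdata hV hinvQSR ζ P hP μ hμ
    hLMI
end
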